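/- arXiv:1904.08108 — 14 statements merged into one kernel-verified Lean document; each statement's English description precedes it below -/
import Mathlib

section
/- Let Q : ℤ × ℝ → ℝ be nowhere zero and differentiable in t, and define R(n) = −1/Q(n−1). Then Q satisfies ∂_t Q(n) = Q(n+1) − 2Q(n) − Q(n)²R(n) for all n ∈ ℤ if and only if R satisfies ∂_t R(n) = −R(n−1) + 2R(n) + Q(n)R(n)² for all n ∈ ℤ. -/
/-!
Under `R (n + 1) = -1 / Q n` one has `∂_t R (n + 1) = ∂_t Q n / Q n ^ 2`, and dividing the
`Q`-equation at `n` by `Q n ^ 2` gives exactly the `R`-equation at `n + 1`. Since `Q` never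
vanishes this division is reversible, and `n ↦ n + 1` is a bijection of `ℤ`.
-/

section RagniscoTu

variable {𝕜 : Type*} [NontriviallyNormedField 𝕜]

/-- As `f x ≠ 0`, `f` is differentiable at `x` iff `f⁻¹` is; if not, both sides are the junk
value `0`. -/
theorem deriv_fun_inv_of_ne_zero {f : 𝕜 → 𝕜} {x : 𝕜} (hx : f x ≠ 0) :
    deriv (fun y => (f y)⁻¹) x = -deriv f x / f x ^ 2 := by
  by_cases hf : DifferentiableAt 𝕜 f x
  · exact deriv_fun_inv'' hf hx
  · have hf_inv : ¬DifferentiableAt 𝕜 (fun y => (f y)⁻¹) x := fun h => hf <| by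
      simpa using h.fun_inv (inv_ne_zero hx)
    rw [deriv_zero_of_not_differentiableAt hf, deriv_zero_of_not_differentiableAt hf_inv]
    simp

theorem deriv_neg_one_div_of_ne_zero {f : 𝕜 → 𝕜} {x : 𝕜} (hx : f x ≠ 0) :
    deriv (fun y => -1 / f y) x = deriv f x / f x ^ 2 := by
  simp only [neg_div, one_div, deriv.fun_neg, deriv_fun_inv_of_ne_zero hx, neg_neg]

def QFlowAt (Q R : ℤ → 𝕜 → 𝕜) (n : ℤ) (t : 𝕜) : Prop :=
  deriv (Q n) t = Q (n + 1) t - 2 * Q n t - (Q n t) ^ 2 * R n t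

def RFlowAt (Q R : ℤ → 𝕜 → 𝕜) (n : ℤ) (t : 𝕜) : Prop :=
  deriv (R n) t = -R (n - 1) t + 2 * R n t + Q n t * (R n t) ^ 2

def oneFieldReduction (Q : ℤ → 𝕜 → 𝕜) : ℤ → 𝕜 → 𝕜 :=
  fun n t => -1 / Q (n - 1) t

theorem qFlowAt_iff_rFlowAt_add_one {Q : ℤ → 𝕜 → 𝕜} (hQ0 : ∀ n t, Q n t ≠ 0) (n : ℤ) (t : 𝕜) :
    QFlowAt Q (oneFieldReduction Q) n t ↔ RFlowAt Q (oneFieldReduction Q) (n + 1) t := by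
  have hprev := hQ0 (n - 1) t
  have hcur := hQ0 n t
  have hR : deriv (oneFieldReduction Q (n + 1)) t = deriv (Q n) t / Q n t ^ 2 := by
    show deriv (fun y => -1 / Q (n + 1 - 1) y) t = _
    rw [add_sub_cancel_right]
    exact deriv_neg_one_div_of_ne_zero hcur
  simp only [QFlowAt, RFlowAt, hR, oneFieldReduction, add_sub_cancel_right]
  rw [div_eq_iff (pow_ne_zero 2 hcur)]
  constructor <;> intro h <;> rw [h] <;> field_simp <;> ring

end RagniscoTu

theorem ragnisco_tu_one_field_reduction_consistency_general
    (Q : ℤ → ℝ → ℝ) (hQ0 : ∀ n t, Q n t ≠ 0) :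
    let R : ℤ → ℝ → ℝ := fun n t => -1 / Q (n - 1) t
    ((∀ n t, deriv (Q n) t
        = Q (n + 1) t - 2 * Q n t - (Q n t) ^ 2 * R n t) ↔
     (∀ n t, deriv (R n) t
        = -R (n - 1) t + 2 * R n t + Q n t * (R n t) ^ 2)) := by
  show (∀ n t, QFlowAt Q (oneFieldReduction Q) n t) ↔
    ∀ n t, RFlowAt Q (oneFieldReduction Q) n t
  simp only [qFlowAt_iff_rFlowAt_add_one hQ0]
  exact ⟨fun h n => by simpa using h (n - 1), fun h n => h (n + 1)⟩

/-- Consistency of the one-field reduction `R(n+1) = -1/Q(n)` with the first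
flow of the refined Ragnisco-Tu hierarchy. -/
theorem ragnisco_tu_one_field_reduction_consistency
    (Q : ℤ → ℝ → ℝ) (hQ0 : ∀ n t, Q n t ≠ 0)
    (hQd : ∀ n, Differentiable ℝ (Q n)) :
    let R : ℤ → ℝ → ℝ := fun n t => -1 / Q (n - 1) t
    ((∀ n t, deriv (Q n) t
        = Q (n + 1) t - 2 * Q n t - (Q n t) ^ 2 * R n t) ↔
     (∀ n t, deriv (R n) t
        = -R (n - 1) t + 2 * R n t + Q n t * (R n t) ^ 2)) :=
  ragnisco_tu_one_field_reduction_consistency_general Q hQ0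
end

section
/- Let Q : ℤ × ℝ → ℝ be differentiable in t with Q(n)/Q(n−1) > 0 for all n, suppose Q satisfies ∂_t Q(n) = Q(n+1) − 2Q(n) − Q(n)²R(n) with R(n) = −1/Q(n−1), and define q(n) = ln(Q(n)/Q(n−1)). Then q satisfies the Volterra lattice equation ∂_t q(n) = e^{q(n+1)} − e^{q(n−1)} for all n ∈ ℤ. -/
/-!
Since `q(n) = log Q(n) - log Q(n-1)`, its time derivative is the difference of the logarithmic
derivatives of `Q(n)` and `Q(n-1)`. Under the reduction `R(n) = -1/Q(n-1)` the flow gives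
`∂ₜ log Q(n) = Q(n+1)/Q(n) - 2 + Q(n)/Q(n-1)`, so in the difference everything but
`Q(n+1)/Q(n) - Q(n-1)/Q(n-2) = e^{q(n+1)} - e^{q(n-1)}` telescopes away.
-/

theorem HasDerivAt.log_div {f g : ℝ → ℝ} {f' g' x : ℝ} (hf : HasDerivAt f f' x)
    (hg : HasDerivAt g g' x) (hfx : f x ≠ 0) (hgx : g x ≠ 0) :
    HasDerivAt (fun s => Real.log (f s / g s)) (f' / f x - g' / g x) x := by
  refine ((hf.div hg hgx).log (div_ne_zero hfx hgx)).congr_deriv ?_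
  simp only [Pi.div_apply]
  field_simp

/-- The one-field reduction `R(n+1) = -1/Q(n)` of the first refined Ragnisco-Tu
flow yields the Volterra lattice equation for `q(n) = ln(Q(n)/Q(n-1))`. -/
theorem ragnisco_tu_reduces_to_volterra
    (Q : ℤ → ℝ → ℝ)
    (hpos : ∀ n t, Q n t / Q (n - 1) t > 0)
    (hflow : ∀ n t, HasDerivAt (Q n)
      (Q (n + 1) t - 2 * Q n t - (Q n t) ^ 2 * (-1 / Q (n - 1) t)) t) :
    let q : ℤ → ℝ → ℝ := fun n t => Real.log (Q n t / Q (n - 1) t)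
    ∀ n t, HasDerivAt (q n) (Real.exp (q (n + 1) t) - Real.exp (q (n - 1) t)) t := by
  intro q n t
  have hQ (m : ℤ) : Q m t ≠ 0 ∧ Q (m - 1) t ≠ 0 := div_ne_zero_iff.mp (hpos m t).ne'
  have hlogDeriv (m : ℤ) :
      (Q (m + 1) t - 2 * Q m t - Q m t ^ 2 * (-1 / Q (m - 1) t)) / Q m t =
        Q (m + 1) t / Q m t - 2 + Q m t / Q (m - 1) t := by
    field_simp [(hQ m).1, (hQ m).2]
    ring
  have hexp (m : ℤ) : Real.exp (q m t) = Q m t / Q (m - 1) t := Real.exp_log (hpos m t)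
  have hq := (hflow n t).log_div (hflow (n - 1) t) (hQ n).1 (hQ n).2
  rw [hexp, hexp, add_sub_cancel_right]
  convert hq using 1
  rw [hlogDeriv, hlogDeriv, sub_add_cancel]
  ring
end

section
/- Let a, b : ℤ × ℝ → ℝ be nowhere zero and differentiable in t, satisfying ∂_t a(n) = a(n)b(n)(a(n) − a(n+1)) and ∂_t b(n) = a(n)b(n)(b(n−1) − b(n)) for all n ∈ ℤ. Define v(n) = a(n)b(n) and r(n) = −a(n+1)b(n). Then (v, r) satisfies the R-Toda(+1) lattice: ∂_t v(n) = v(n)(r(n) − r(n−1)) and ∂_t r(n) = r(n)(r(n+1) + v(n+1) − r(n−1) − v(n)) for all n ∈ ℤ. -/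
theorem constrained_dDmKP_gives_RToda_general
    (a b : ℤ → ℝ → ℝ)
    (ha : ∀ n t, HasDerivAt (a n) (a n t * b n t * (a n t - a (n + 1) t)) t)
    (hb : ∀ n t, HasDerivAt (b n) (a n t * b n t * (b (n - 1) t - b n t)) t) :
    let v : ℤ → ℝ → ℝ := fun n t => a n t * b n t
    let r : ℤ → ℝ → ℝ := fun n t => -(a (n + 1) t * b n t)
    (∀ n t, HasDerivAt (v n) (v n t * (r n t - r (n - 1) t)) t) ∧
    (∀ n t, HasDerivAt (r n)
      (r n t * (r (n + 1) t + v (n + 1) t - r (n - 1) t - v n t)) t) := by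
  intro v r
  refine ⟨fun n t => ((ha n t).mul (hb n t)).congr_deriv ?_,
    fun n t => ((ha (n + 1) t).mul (hb n t)).neg.congr_deriv ?_⟩ <;>
  · simp only [v, r, sub_add_cancel]
    ring

/-- The first flow of the constrained D∆mKP system yields the R-Toda(+1)
lattice under the transformation `v = a b`, `r = -(Ea) b`. -/
theorem constrained_dDmKP_gives_RToda
    (a b : ℤ → ℝ → ℝ)
    (ha0 : ∀ n t, a n t ≠ 0) (hb0 : ∀ n t, b n t ≠ 0)
    (ha : ∀ n t, HasDerivAt (a n) (a n t * b n t * (a n t - a (n + 1) t)) t)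
    (hb : ∀ n t, HasDerivAt (b n) (a n t * b n t * (b (n - 1) t - b n t)) t) :
    let v : ℤ → ℝ → ℝ := fun n t => a n t * b n t
    let r : ℤ → ℝ → ℝ := fun n t => -(a (n + 1) t * b n t)
    (∀ n t, HasDerivAt (v n) (v n t * (r n t - r (n - 1) t)) t) ∧
    (∀ n t, HasDerivAt (r n)
      (r n t * (r (n + 1) t + v (n + 1) t - r (n - 1) t - v n t)) t) :=
  constrained_dDmKP_gives_RToda_general a b ha hb
end

section
/- Let v, r : ℤ × ℝ → ℝ with v nowhere zero, differentiable in t, satisfying the R-Toda(+1) lattice ∂_t v(n) = v(n)(r(n) − r(n−1)), ∂_t r(n) = r(n)(r(n+1) + v(n+1) − r(n−1) − v(n)). Define v'(n, τ) = 1/v(n, −τ) and r'(n, τ) = r(n, −τ) / (v(n, −τ) v(n+1, −τ)). Then (v', r') satisfies the R-Toda(−1) lattice: ∂_τ v'(n) = r'(n)/v'(n+1) − r'(n−1)/v'(n−1) and ∂_τ r'(n) = r'(n)/v'(n) − r'(n)/v'(n+1) for all n ∈ ℤ. -/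
/-!
Both lattices are statements about logarithmic derivatives: R-Toda(+1) says that `v n` and `r n`
have logarithmic derivatives `r n - r (n - 1)` and `r (n + 1) + v (n + 1) - r (n - 1) - v n`.
Logarithmic derivatives add under products, subtract under quotients and change sign under
`t = -τ`, so `v' n = 1 / v n (-τ)` has logarithmic derivative `r n - r (n - 1)` and
`r' n = r n (-τ) / (v n (-τ) * v (n + 1) (-τ))` has logarithmic derivative `v n - v (n + 1)`,
the r-terms telescoping away. Since `1 / v' = v`, these are the R-Toda(−1) equations.
-/

section LogDeriv

variable {f g : ℝ → ℝ} {x a b : ℝ}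

theorem HasDerivAt.mul_logDeriv (hf : HasDerivAt f (f x * a) x) (hg : HasDerivAt g (g x * b) x) :
    HasDerivAt (fun y => f y * g y) (f x * g x * (a + b)) x :=
  (hf.mul hg).congr_deriv (by ring)

theorem HasDerivAt.div_logDeriv (hf : HasDerivAt f (f x * a) x) (hg : HasDerivAt g (g x * b) x)
    (hgx : g x ≠ 0) : HasDerivAt (fun y => f y / g y) (f x / g x * (a - b)) x :=
  (hf.div hg hgx).congr_deriv (by field_simp)

theorem HasDerivAt.comp_neg_logDeriv (hf : HasDerivAt f (f (-x) * a) (-x)) :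
    HasDerivAt (fun y => f (-y)) (f (-x) * -a) x :=
  (hf.comp x (hasDerivAt_neg x)).congr_deriv (by ring)

end LogDeriv

/-- The invertible transformation `v' = 1/v`, `r' = r/(v·Ev)`, `t = -τ` maps
the R-Toda(+1) lattice to the R-Toda(−1) lattice. -/
theorem RToda_plus_to_minus
    (v r : ℤ → ℝ → ℝ)
    (hv0 : ∀ n t, v n t ≠ 0)
    (hv : ∀ n t, HasDerivAt (v n) (v n t * (r n t - r (n - 1) t)) t)
    (hr : ∀ n t, HasDerivAt (r n)
      (r n t * (r (n + 1) t + v (n + 1) t - r (n - 1) t - v n t)) t) :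
    let v' : ℤ → ℝ → ℝ := fun n τ => 1 / v n (-τ)
    let r' : ℤ → ℝ → ℝ := fun n τ => r n (-τ) / (v n (-τ) * v (n + 1) (-τ))
    (∀ n τ, HasDerivAt (v' n)
      (r' n τ / v' (n + 1) τ - r' (n - 1) τ / v' (n - 1) τ) τ) ∧
    (∀ n τ, HasDerivAt (r' n)
      (r' n τ / v' n τ - r' n τ / v' (n + 1) τ) τ) := by
  intro v' r'
  have hv_rev n τ := (hv n (-τ)).comp_neg_logDeriv
  have hr_rev n τ := (hr n (-τ)).comp_neg_logDeriv
  constructor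
  · intro n τ
    have hone := (hasDerivAt_const τ (1 : ℝ)).congr_deriv (mul_zero 1).symm
    refine (hone.div_logDeriv (hv_rev n τ) (hv0 n (-τ))).congr_deriv ?_
    have hv_pred := hv0 (n - 1) (-τ)
    have hv_succ := hv0 (n + 1) (-τ)
    simp only [v', r', sub_add_cancel]
    field_simp
    ring
  · intro n τ
    have hden := (hv_rev n τ).mul_logDeriv (hv_rev (n + 1) τ)
    have hv_n := hv0 n (-τ)
    have hv_succ := hv0 (n + 1) (-τ)
    refine ((hr_rev n τ).div_logDeriv hden (mul_ne_zero hv_n hv_succ)).congr_deriv ?_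
    simp only [v', r', add_sub_cancel_right]
    field_simp
    ring
end

section
/- Let v : ℤ × ℝ → ℝ be differentiable in t and set r(n) = −v(n). Then the pair (v, r) satisfies the R-Toda(+1) lattice ∂_t v(n) = v(n)(r(n) − r(n−1)), ∂_t r(n) = r(n)(r(n+1) + v(n+1) − r(n−1) − v(n)) for all n ∈ ℤ if and only if v satisfies the differential-difference Burgers equation ∂_t v(n) = v(n)(v(n−1) − v(n)) for all n ∈ ℤ. -/
theorem RToda_reduction_burgers_one_general
    (v : ℤ → ℝ → ℝ) :
    let r : ℤ → ℝ → ℝ := fun n t => -v n t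
    ((∀ n t, deriv (v n) t = v n t * (r n t - r (n - 1) t)) ∧
     (∀ n t, deriv (r n) t
        = r n t * (r (n + 1) t + v (n + 1) t - r (n - 1) t - v n t)) ↔
     (∀ n t, deriv (v n) t = v n t * (v (n - 1) t - v n t))) := by
  intro r
  have first_rhs : ∀ n t, v n t * (r n t - r (n - 1) t) = v n t * (v (n - 1) t - v n t) :=
    fun n t => by simp only [r]; ring
  -- `r (n + 1) + v (n + 1)` vanishes, so the second equation is the negated Burgers equation.
  have second_rhs : ∀ n t, r n t * (r (n + 1) t + v (n + 1) t - r (n - 1) t - v n t)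
      = -(v n t * (v (n - 1) t - v n t)) :=
    fun n t => by simp only [r]; ring
  have deriv_r : ∀ n t, deriv (r n) t = -deriv (v n) t := fun n t => deriv.fun_neg
  simp only [first_rhs, second_rhs, deriv_r, neg_inj, and_self]

/-- The one-field reduction `r = -v` of the R-Toda(+1) lattice is equivalent to
the differential-difference Burgers equation `v_t = v(v(n-1) - v(n))`. -/
theorem RToda_reduction_burgers_one
    (v : ℤ → ℝ → ℝ) (hvd : ∀ n, Differentiable ℝ (v n)) :
    let r : ℤ → ℝ → ℝ := fun n t => -v n t
    ((∀ n t, deriv (v n) t = v n t * (r n t - r (n - 1) t)) ∧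
     (∀ n t, deriv (r n) t
        = r n t * (r (n + 1) t + v (n + 1) t - r (n - 1) t - v n t)) ↔
     (∀ n t, deriv (v n) t = v n t * (v (n - 1) t - v n t))) :=
  RToda_reduction_burgers_one_general v
end

section
/- Let v : ℤ × ℝ → ℝ be differentiable in t and set r(n) = −v(n+1). Then the pair (v, r) satisfies the R-Toda(+1) lattice ∂_t v(n) = v(n)(r(n) − r(n−1)), ∂_t r(n) = r(n)(r(n+1) + v(n+1) − r(n−1) − v(n)) for all n ∈ ℤ if and only if v satisfies the differential-difference Burgers equation ∂_t v(n) = v(n)(v(n) − v(n+1)) for all n ∈ ℤ. -/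
/-!
Under `r n = -v (n + 1)` the difference `r n - r (n - 1)` is `v n - v (n + 1)`, so the first
lattice equation is Burgers' equation at `n`; since `∂ₜ r n = -∂ₜ v (n + 1)`, the second one is
Burgers' equation at `n + 1` multiplied by `-1`.
-/

section RTodaReduction

variable (v : ℤ → ℝ → ℝ) (n : ℤ) (t : ℝ)

theorem rToda_v_eq_iff_burgers :
    deriv (v n) t = v n t * (-v (n + 1) t - -v (n - 1 + 1) t) ↔
      deriv (v n) t = v n t * (v n t - v (n + 1) t) := by
  rw [sub_add_cancel, neg_sub_neg]

theorem rToda_r_eq_iff_burgers_succ :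
    deriv (fun t => -v (n + 1) t) t =
        -v (n + 1) t * (-v (n + 1 + 1) t + v (n + 1) t - -v (n - 1 + 1) t - v n t) ↔
      deriv (v (n + 1)) t = v (n + 1) t * (v (n + 1) t - v (n + 1 + 1) t) := by
  rw [deriv.fun_neg, sub_add_cancel,
    show -v (n + 1) t * (-v (n + 1 + 1) t + v (n + 1) t - -v n t - v n t) =
      -(v (n + 1) t * (v (n + 1) t - v (n + 1 + 1) t)) by ring, neg_inj]

end RTodaReduction

theorem RToda_reduction_burgers_two_general
    (v : ℤ → ℝ → ℝ) :
    let r : ℤ → ℝ → ℝ := fun n t => -v (n + 1) t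
    ((∀ n t, deriv (v n) t = v n t * (r n t - r (n - 1) t)) ∧
     (∀ n t, deriv (r n) t
        = r n t * (r (n + 1) t + v (n + 1) t - r (n - 1) t - v n t)) ↔
     (∀ n t, deriv (v n) t = v n t * (v n t - v (n + 1) t))) := by
  intro r
  simp only [r, rToda_v_eq_iff_burgers, rToda_r_eq_iff_burgers_succ]
  exact ⟨And.left, fun burgers => ⟨burgers, fun n => burgers (n + 1)⟩⟩

/-- The one-field reduction `r(n) = -v(n+1)` of the R-Toda(+1) lattice is
equivalent to the differential-difference Burgers equation
`v_t = v(v(n) - v(n+1))`. -/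
theorem RToda_reduction_burgers_two
    (v : ℤ → ℝ → ℝ) (hvd : ∀ n, Differentiable ℝ (v n)) :
    let r : ℤ → ℝ → ℝ := fun n t => -v (n + 1) t
    ((∀ n t, deriv (v n) t = v n t * (r n t - r (n - 1) t)) ∧
     (∀ n t, deriv (r n) t
        = r n t * (r (n + 1) t + v (n + 1) t - r (n - 1) t - v n t)) ↔
     (∀ n t, deriv (v n) t = v n t * (v n t - v (n + 1) t))) :=
  RToda_reduction_burgers_two_general v
end

section
/- Let v : ℤ × ℝ² → ℝ, (n, x, t) ↦ v(n, x, t), be smooth in (x, t) and satisfy, for all n ∈ ℤ: (i) ∂_x v(n) = v(n)(v(n−1) − v(n)) and (ii) ∂_t v(n) = v(n)[ v(n)v(n−1) − v(n−1)v(n−2) ]. Then each v(n, ·, ·) satisfies the continuous Burgers equation ∂_t v(n) + ∂_x² v(n) + 2 v(n) ∂_x v(n) = 0. -/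
/-- Lemma A.1 (first nontrivial instance): under the differential-difference
Burgers equation in `x`, the second differential-difference Burgers flow in `t`
reduces to the continuous Burgers equation. -/
theorem dd_burgers_gives_continuous_burgers
    (v : ℤ → ℝ → ℝ → ℝ)
    (hsmooth : ∀ n, ContDiff ℝ (⊤ : ℕ∞) (fun p : ℝ × ℝ => v n p.1 p.2))
    (hx : ∀ n x t, deriv (fun y => v n y t) x
      = v n x t * (v (n - 1) x t - v n x t))
    (ht : ∀ n x t, deriv (fun s => v n x s) t
      = v n x t * (v n x t * v (n - 1) x t - v (n - 1) x t * v (n - 2) x t)) :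
    ∀ n x t, deriv (fun s => v n x s) t
      + deriv (fun y => deriv (fun z => v n z t) y) x
      + 2 * v n x t * deriv (fun y => v n y t) x = 0 := by
  have hd : ∀ n t, Differentiable ℝ (fun y => v n y t) := fun n t =>
    ((hsmooth n).differentiable (by simp)).comp
      (differentiable_id.prodMk (differentiable_const t))
  intro n x t
  have h2 : deriv (fun y => deriv (fun z => v n z t) y) x
      = deriv (fun y => v n y t * (v (n - 1) y t - v n y t)) x := by
    congr 1; funext y; exact hx n y t
  have e : n - 1 - 1 = n - 2 := by ring
  rw [h2, ht,
    deriv_fun_mul ((hd n t) x) (((hd (n - 1) t) x).fun_sub ((hd n t) x)),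
    deriv_fun_sub ((hd (n - 1) t) x) ((hd n t) x), hx, hx, e]
  ring
end

section
/- Let λ ∈ ℝ and let v : ℝ² → ℝ, (x, t) ↦ v(x, t), be smooth with v + λ nowhere zero, satisfying the (Galilean-shifted) Burgers equation ∂_t v = −( ∂_x² v + 2 v ∂_x v + λ ∂_x v ). Define w = v + (∂_x v)/(v + λ). Then w satisfies the same equation: ∂_t w = −( ∂_x² w + 2 w ∂_x w + λ ∂_x w ). -/
noncomputable def px (f : ℝ × ℝ → ℝ) : ℝ × ℝ → ℝ := fun p => fderiv ℝ f p (1, 0)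
noncomputable def pt (f : ℝ × ℝ → ℝ) : ℝ × ℝ → ℝ := fun p => fderiv ℝ f p (0, 1)

lemma px_contDiff {f : ℝ × ℝ → ℝ} (hf : ContDiff ℝ (⊤ : ℕ∞) f) : ContDiff ℝ (⊤ : ℕ∞) (px f) :=
  (hf.fderiv_right (by simp)).clm_apply contDiff_const

lemma pt_contDiff {f : ℝ × ℝ → ℝ} (hf : ContDiff ℝ (⊤ : ℕ∞) f) : ContDiff ℝ (⊤ : ℕ∞) (pt f) :=
  (hf.fderiv_right (by simp)).clm_apply contDiff_const

lemma hasDerivAt_lineX {f : ℝ × ℝ → ℝ} (hf : ContDiff ℝ (⊤ : ℕ∞) f) (x t : ℝ) :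
    HasDerivAt (fun y => f (y, t)) (px f (x, t)) x :=
  (hf.differentiable (by simp) (x, t)).hasFDerivAt.comp_hasDerivAt x
    ((hasDerivAt_id x).prodMk (hasDerivAt_const x t))

lemma hasDerivAt_lineT {f : ℝ × ℝ → ℝ} (hf : ContDiff ℝ (⊤ : ℕ∞) f) (x t : ℝ) :
    HasDerivAt (fun s => f (x, s)) (pt f (x, t)) t :=
  (hf.differentiable (by simp) (x, t)).hasFDerivAt.comp_hasDerivAt t
    ((hasDerivAt_const t x).prodMk (hasDerivAt_id t))

lemma clairaut {f : ℝ × ℝ → ℝ} (hf : ContDiff ℝ (⊤ : ℕ∞) f) (p : ℝ × ℝ) :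
    pt (px f) p = px (pt f) p := by
  have hd : DifferentiableAt ℝ (fderiv ℝ f) p :=
    ((hf.fderiv_right (m := (⊤ : ℕ∞)) (by simp)).differentiable (by simp)) p
  have h1 : fderiv ℝ (px f) p = (fderiv ℝ f p).comp (fderiv ℝ (fun _ : ℝ × ℝ => ((1:ℝ),(0:ℝ))) p)
      + (fderiv ℝ (fderiv ℝ f) p).flip (1, 0) :=
    fderiv_clm_apply hd (differentiableAt_const _)
  have h2 : fderiv ℝ (pt f) p = (fderiv ℝ f p).comp (fderiv ℝ (fun _ : ℝ × ℝ => ((0:ℝ),(1:ℝ))) p)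
      + (fderiv ℝ (fderiv ℝ f) p).flip (0, 1) :=
    fderiv_clm_apply hd (differentiableAt_const _)
  have hsym := hf.contDiffAt.isSymmSndFDerivAt ((by rw [minSmoothness_of_isRCLikeNormedField]; exact WithTop.coe_le_coe.mpr le_top)) (x := p)
  show fderiv ℝ (px f) p (0,1) = fderiv ℝ (pt f) p (1,0)
  rw [h1, h2]
  simp [hsym (0,1) (1,0)]

theorem key (lam : ℝ) (f : ℝ × ℝ → ℝ) (hf : ContDiff ℝ (⊤ : ℕ∞) f)
    (h0 : ∀ p, f p + lam ≠ 0)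
    (hpde : ∀ p, pt f p = -(px (px f) p + 2 * f p * px f p + lam * px f p)) :
    ∀ p : ℝ × ℝ, pt (fun q => f q + px f q / (f q + lam)) p
      = -(px (px (fun q => f q + px f q / (f q + lam))) p
          + 2 * (f p + px f p / (f p + lam)) * px (fun q => f q + px f q / (f q + lam)) p
          + lam * px (fun q => f q + px f q / (f q + lam)) p) := by
  set W : ℝ × ℝ → ℝ := fun q => f q + px f q / (f q + lam) with hW_def
  have hvx := px_contDiff hf
  have hvxx := px_contDiff hvx
  have hW : ContDiff ℝ (⊤ : ℕ∞) W :=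
    hf.add (hvx.div (hf.add contDiff_const) h0)
  -- formula for px W at every point
  have hpxW : ∀ q : ℝ × ℝ, px W q = px f q
      + (px (px f) q * (f q + lam) - px f q * px f q) / (f q + lam) ^ 2 := by
    rintro ⟨c, d⟩
    have h1 := hasDerivAt_lineX hf c d
    have h2 := hasDerivAt_lineX hvx c d
    have hbig : HasDerivAt (fun y => f (y, d) + px f (y, d) / (f (y, d) + lam))
        (px f (c, d) + (px (px f) (c, d) * (f (c, d) + lam) - px f (c, d) * px f (c, d))
          / (f (c, d) + lam) ^ 2) c :=
      h1.add (h2.div (h1.add_const lam) (h0 (c, d)))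
    exact (hasDerivAt_lineX hW c d).unique hbig
  -- formula for pt W
  rintro ⟨a, b⟩
  have h1 := hasDerivAt_lineX hf a b
  have h2 := hasDerivAt_lineX hvx a b
  have h3 := hasDerivAt_lineX hvxx a b
  have k1 := hasDerivAt_lineT hf a b
  have k2 := hasDerivAt_lineT hvx a b
  have hptW : pt W (a, b) = pt f (a, b)
      + (pt (px f) (a, b) * (f (a, b) + lam) - px f (a, b) * pt f (a, b))
        / (f (a, b) + lam) ^ 2 := by
    have hbig : HasDerivAt (fun s => f (a, s) + px f (a, s) / (f (a, s) + lam))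
        (pt f (a, b) + (pt (px f) (a, b) * (f (a, b) + lam) - px f (a, b) * pt f (a, b))
          / (f (a, b) + lam) ^ 2) b :=
      k1.add (k2.div (k1.add_const lam) (h0 (a, b)))
    exact (hasDerivAt_lineT hW a b).unique hbig
  -- formula for px (px W)
  have hrw : (fun y => px W (y, b)) = (fun y => px f (y, b)
      + (px (px f) (y, b) * (f (y, b) + lam) - px f (y, b) * px f (y, b))
        / (f (y, b) + lam) ^ 2) := funext fun y => hpxW (y, b)
  have hnum : HasDerivAt (fun y => px (px f) (y, b) * (f (y, b) + lam)
      - px f (y, b) * px f (y, b))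
      (px (px (px f)) (a, b) * (f (a, b) + lam) + px (px f) (a, b) * px f (a, b)
        - (px (px f) (a, b) * px f (a, b) + px f (a, b) * px (px f) (a, b))) a :=
    (h3.mul (h1.add_const lam)).sub (h2.mul h2)
  have hden : HasDerivAt (fun y => (f (y, b) + lam) ^ 2)
      ((2 : ℕ) * (f (a, b) + lam) ^ 1 * px f (a, b)) a := (h1.add_const lam).pow 2
  have hden0 : (f (a, b) + lam) ^ 2 ≠ 0 := pow_ne_zero _ (h0 (a, b))
  have hpxpxW : px (px W) (a, b)
      = px (px f) (a, b)
        + ((px (px (px f)) (a, b) * (f (a, b) + lam) + px (px f) (a, b) * px f (a, b)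
            - (px (px f) (a, b) * px f (a, b) + px f (a, b) * px (px f) (a, b)))
              * (f (a, b) + lam) ^ 2
           - (px (px f) (a, b) * (f (a, b) + lam) - px f (a, b) * px f (a, b))
              * ((2 : ℕ) * (f (a, b) + lam) ^ 1 * px f (a, b)))
          / ((f (a, b) + lam) ^ 2) ^ 2 := by
    have hl := hasDerivAt_lineX (px_contDiff hW) a b
    rw [hrw] at hl
    exact hl.unique (h2.add (hnum.div hden hden0))
  -- mixed partial via Clairaut and pde
  have hptf : (fun q => pt f q)
      = fun q => -(px (px f) q + 2 * f q * px f q + lam * px f q) := funext hpde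
  have hmix : pt (px f) (a, b) = -(px (px (px f)) (a, b)
      + (2 * px f (a, b) * px f (a, b) + 2 * f (a, b) * px (px f) (a, b))
      + lam * px (px f) (a, b)) := by
    rw [clairaut hf]
    have hl := hasDerivAt_lineX (pt_contDiff hf) a b
    have : (fun y => pt f (y, b))
        = fun y => -(px (px f) (y, b) + 2 * f (y, b) * px f (y, b) + lam * px f (y, b)) :=
      funext fun y => hpde (y, b)
    rw [this] at hl
    exact hl.unique (((h3.add (((h1.const_mul 2).mul h2))).add (h2.const_mul lam)).neg)
  -- put together
  rw [hptW, hpxpxW, hpxW (a, b), hpde (a, b), hmix]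
  show _ = -(_ + 2 * (f (a, b) + px f (a, b) / (f (a, b) + lam)) * _ + _)
  have h0' := h0 (a, b)
  field_simp
  ring


/-- Theorem A.2 (first nontrivial instance): `w = v + v_x/(v+λ)` is an
auto-Bäcklund transformation of the Galilean-shifted Burgers equation. -/
theorem burgers_backlund
    (lam : ℝ) (v : ℝ → ℝ → ℝ)
    (hsmooth : ContDiff ℝ (⊤ : ℕ∞) (fun p : ℝ × ℝ => v p.1 p.2))
    (hv0 : ∀ x t, v x t + lam ≠ 0)
    (hpde : ∀ x t, deriv (fun s => v x s) t
      = -(deriv (fun y => deriv (fun z => v z t) y) x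
          + 2 * v x t * deriv (fun y => v y t) x
          + lam * deriv (fun y => v y t) x)) :
    let w : ℝ → ℝ → ℝ := fun x t => v x t + deriv (fun y => v y t) x / (v x t + lam)
    ∀ x t, deriv (fun s => w x s) t
      = -(deriv (fun y => deriv (fun z => w z t) y) x
          + 2 * w x t * deriv (fun y => w y t) x
          + lam * deriv (fun y => w y t) x) := by
  intro w x t
  have hf : ContDiff ℝ (⊤ : ℕ∞) (fun p : ℝ × ℝ => v p.1 p.2) := hsmooth
  set f : ℝ × ℝ → ℝ := fun p : ℝ × ℝ => v p.1 p.2 with hfdef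
  have h0 : ∀ p : ℝ × ℝ, f p + lam ≠ 0 := fun p => hv0 p.1 p.2
  have hvx := px_contDiff hf
  -- translate pde to partials
  have pde : ∀ p : ℝ × ℝ, pt f p = -(px (px f) p + 2 * f p * px f p + lam * px f p) := by
    rintro ⟨a, b⟩
    have L : deriv (fun s => v a s) b = pt f (a, b) := (hasDerivAt_lineT hf a b).deriv
    have Lx : deriv (fun y => v y b) a = px f (a, b) := (hasDerivAt_lineX hf a b).deriv
    have Lxx : deriv (fun y => deriv (fun z => v z b) y) a = px (px f) (a, b) := by
      have e : (fun y => deriv (fun z => v z b) y) = fun y => px f (y, b) :=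
        funext fun y => (hasDerivAt_lineX hf y b).deriv
      rw [e]; exact (hasDerivAt_lineX hvx a b).deriv
    have h := hpde a b
    rw [L, Lx, Lxx] at h
    exact h
  have hkey := key lam f hf h0 pde (x, t)
  set W : ℝ × ℝ → ℝ := fun q => f q + px f q / (f q + lam) with hWdef
  have hW : ContDiff ℝ (⊤ : ℕ∞) W := hf.add (hvx.div (hf.add contDiff_const) h0)
  -- w y s = W (y, s)
  have hw : ∀ y s, w y s = W (y, s) := by
    intro y s
    show v y s + deriv (fun z => v z s) y / (v y s + lam) = _
    rw [(hasDerivAt_lineX hf y s).deriv]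
  -- translate goal
  have G1 : deriv (fun s => w x s) t = pt W (x, t) := by
    have e : (fun s => w x s) = fun s => W (x, s) := funext fun s => hw x s
    rw [e]; exact (hasDerivAt_lineT hW x t).deriv
  have G2 : deriv (fun y => w y t) x = px W (x, t) := by
    have e : (fun y => w y t) = fun y => W (y, t) := funext fun y => hw y t
    rw [e]; exact (hasDerivAt_lineX hW x t).deriv
  have G3 : deriv (fun y => deriv (fun z => w z t) y) x = px (px W) (x, t) := by
    have e : (fun y => deriv (fun z => w z t) y) = fun y => px W (y, t) := by
      funext y
      have e2 : (fun z => w z t) = fun z => W (z, t) := funext fun z => hw z t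
      rw [e2]; exact (hasDerivAt_lineX hW y t).deriv
    rw [e]; exact (hasDerivAt_lineX (px_contDiff hW) x t).deriv
  rw [G1, G2, G3]
  exact hw x t ▸ hkey
end

section
/- Let p, q ∈ ℝ, let u, a, b : ℝ → ℝ with a and b differentiable, and suppose a′(x) = (a(x) − p)(u(x) − a(x)) and b′(x) = (b(x) − q)(u(x) − b(x)) for all x, and that p − q + b(x) − a(x) ≠ 0 for all x. Define w(x) = (p·b(x) − q·a(x)) / (p − q + b(x) − a(x)). Then w satisfies both Bäcklund relations: w′(x) = (w(x) − p)(b(x) − w(x)) and w′(x) = (w(x) − q)(a(x) − w(x)) for all x. -/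
/-!
By the quotient rule and the two Bäcklund relations, `w'` is a rational expression in `u, a, b`
whose `u`-terms cancel identically; what remains is `(w - p) (b - w)`, and the superposition
formula is exactly the choice of `w` for which this equals `(w - q) (a - w)`.
-/

namespace Burgers

section Algebra

variable {K : Type*} [Field K]

def superposition (p q a b : K) : K :=
  (p * b - q * a) / (p - q + b - a)

theorem superposition_sub_mul_sub_comm (p q a b : K) (hden : p - q + b - a ≠ 0) :
    (superposition p q a b - p) * (b - superposition p q a b) =
      (superposition p q a b - q) * (a - superposition p q a b) := by
  unfold superposition
  field_simp
  ring

theorem superposition_quotient_rule_eq (p q u a b : K) (hden : p - q + b - a ≠ 0) :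
    ((p * ((b - q) * (u - b)) - q * ((a - p) * (u - a))) * (p - q + b - a) -
        (p * b - q * a) * ((b - q) * (u - b) - (a - p) * (u - a))) / (p - q + b - a) ^ 2 =
      (superposition p q a b - p) * (b - superposition p q a b) := by
  unfold superposition
  field_simp
  ring

end Algebra

theorem hasDerivAt_superposition {𝕜 : Type*} [NontriviallyNormedField 𝕜] {p q : 𝕜}
    {u a b : 𝕜 → 𝕜} {x : 𝕜}
    (ha : HasDerivAt a ((a x - p) * (u x - a x)) x)
    (hb : HasDerivAt b ((b x - q) * (u x - b x)) x) (hden : p - q + b x - a x ≠ 0) :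
    HasDerivAt (fun y => superposition p q (a y) (b y))
      ((superposition p q (a x) (b x) - p) * (b x - superposition p q (a x) (b x))) x := by
  have hnum : HasDerivAt (fun y => p * b y - q * a y)
      (p * ((b x - q) * (u x - b x)) - q * ((a x - p) * (u x - a x))) x :=
    (hb.const_mul p).sub (ha.const_mul q)
  have hdenom : HasDerivAt (fun y => p - q + b y - a y)
      ((b x - q) * (u x - b x) - (a x - p) * (u x - a x)) x :=
    (hb.const_add (p - q)).sub ha
  exact (hnum.div hdenom hden).congr_deriv (superposition_quotient_rule_eq p q (u x) _ _ hden)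

end Burgers

/-- Nonlinear superposition formula (Bianchi permutability) for the Bäcklund
transformation of the Burgers hierarchy. -/
theorem burgers_superposition
    (p q : ℝ) (u a b : ℝ → ℝ)
    (ha : ∀ x, HasDerivAt a ((a x - p) * (u x - a x)) x)
    (hb : ∀ x, HasDerivAt b ((b x - q) * (u x - b x)) x)
    (hden : ∀ x, p - q + b x - a x ≠ 0) :
    let w : ℝ → ℝ := fun x => (p * b x - q * a x) / (p - q + b x - a x)
    (∀ x, HasDerivAt w ((w x - p) * (b x - w x)) x) ∧
    (∀ x, HasDerivAt w ((w x - q) * (a x - w x)) x) := by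
  intro w
  have hw : ∀ x, HasDerivAt w ((w x - p) * (b x - w x)) x := fun x =>
    Burgers.hasDerivAt_superposition (ha x) (hb x) (hden x)
  exact ⟨hw, fun x =>
    (hw x).congr_deriv (Burgers.superposition_sub_mul_sub_comm p q _ _ (hden x))⟩
end

section
/- Let p, q, r ∈ ℝ and a, b, c ∈ ℝ, and define F(α, β; s, s′) = (s·β − s′·α)/(s − s′ + β − α) whenever s − s′ + β − α ≠ 0. Assume the six relevant denominators are nonzero, i.e. p−q+b−a ≠ 0, p−r+c−a ≠ 0, q−r+c−b ≠ 0, p−q+F(b,c;q,r)−F(a,c;p,r) ≠ 0, p−r+F(b,c;q,r)−F(a,b;p,q) ≠ 0, and q−r+F(a,c;p,r)−F(a,b;p,q) ≠ 0. Then the three expressions F(F(a,c;p,r), F(b,c;q,r); p, q), F(F(a,b;p,q), F(b,c;q,r); p, r), and F(F(a,b;p,q), F(a,c;p,r); q, r) are all equal. -/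
set_option maxHeartbeats 1000000

/-- Multidimensional consistency (consistency-around-the-cube) of the 3-point
discrete Burgers equation. -/
theorem discrete_burgers_CAC
    (p q r a b c : ℝ) :
    let F : ℝ → ℝ → ℝ → ℝ → ℝ := fun α β s s' => (s * β - s' * α) / (s - s' + β - α)
    p - q + b - a ≠ 0 →
    p - r + c - a ≠ 0 →
    q - r + c - b ≠ 0 →
    p - q + F b c q r - F a c p r ≠ 0 →
    p - r + F b c q r - F a b p q ≠ 0 →
    q - r + F a c p r - F a b p q ≠ 0 →
    F (F a c p r) (F b c q r) p q = F (F a b p q) (F b c q r) p r ∧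
    F (F a b p q) (F b c q r) p r = F (F a b p q) (F a c p r) q r := by
  intro F h1 h2 h3 h4 h5 h6
  -- abbreviations: Na/Da = F a c p r, Nb/Db = F b c q r, Nc/Dc = F a b p q
  set Na := p*c - r*a with hNa
  set Da := p - r + c - a with hDa
  set Nb := q*c - r*b with hNb
  set Db := q - r + c - b with hDb
  set Nc := p*b - q*a with hNc
  set Dc := p - q + b - a with hDc
  have hA : F a c p r = Na/Da := rfl
  have hB : F b c q r = Nb/Db := rfl
  have hC : F a b p q = Nc/Dc := rfl
  set N1 := p*Nb*Da - q*Na*Db with hN1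
  set E1 := (p-q)*Da*Db + Nb*Da - Na*Db with hE1
  set N2 := p*Nb*Dc - r*Nc*Db with hN2
  set E2 := (p-r)*Dc*Db + Nb*Dc - Nc*Db with hE2
  set N3 := q*Na*Dc - r*Nc*Da with hN3
  set E3 := (q-r)*Dc*Da + Na*Dc - Nc*Da with hE3
  have e1 : p - q + F b c q r - F a c p r = E1/(Da*Db) := by
    rw [hA, hB]; field_simp; ring
  have e2 : p - r + F b c q r - F a b p q = E2/(Dc*Db) := by
    rw [hB, hC]; field_simp; ring
  have e3 : q - r + F a c p r - F a b p q = E3/(Dc*Da) := by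
    rw [hA, hC]; field_simp; ring
  have hEE1 : E1 ≠ 0 := by intro h; exact h4 (by rw [e1, h, zero_div])
  have hEE2 : E2 ≠ 0 := by intro h; exact h5 (by rw [e2, h, zero_div])
  have hEE3 : E3 ≠ 0 := by intro h; exact h6 (by rw [e3, h, zero_div])
  have n1 : p * F b c q r - q * F a c p r = N1/(Da*Db) := by
    rw [hA, hB]; field_simp; ring
  have n2 : p * F b c q r - r * F a b p q = N2/(Dc*Db) := by
    rw [hB, hC]; field_simp; ring
  have n3 : q * F a c p r - r * F a b p q = N3/(Dc*Da) := by
    rw [hA, hC]; field_simp; ring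
  have t1 : F (F a c p r) (F b c q r) p q = N1/E1 := by
    show (p * F b c q r - q * F a c p r) / (p - q + F b c q r - F a c p r) = _
    rw [n1, e1, div_div_div_cancel_right₀]
    exact mul_ne_zero h2 h3
  have t2 : F (F a b p q) (F b c q r) p r = N2/E2 := by
    show (p * F b c q r - r * F a b p q) / (p - r + F b c q r - F a b p q) = _
    rw [n2, e2, div_div_div_cancel_right₀]
    exact mul_ne_zero h1 h3
  have t3 : F (F a b p q) (F a c p r) q r = N3/E3 := by
    show (q * F a c p r - r * F a b p q) / (q - r + F a c p r - F a b p q) = _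
    rw [n3, e3, div_div_div_cancel_right₀]
    exact mul_ne_zero h1 h2
  constructor
  · rw [t1, t2, div_eq_div_iff hEE1 hEE2]
    simp only [hN1, hE1, hN2, hE2, hNa, hDa, hNb, hDb, hNc, hDc]
    ring
  · rw [t2, t3, div_eq_div_iff hEE2 hEE3]
    simp only [hN2, hE2, hN3, hE3, hNa, hDa, hNb, hDb, hNc, hDc]
    ring
end

section
/- Let u : ℤ² → ℝ, let p, q, r ∈ ℝ with r ≠ 0, and for each (n, m) ∈ ℤ² define the 2×2 real matrices U(n,m) = [[p, −r·u(n+1,m)], [1, p − r − u(n+1,m)]] and V(n,m) = [[q, −r·u(n,m+1)], [1, q − r − u(n,m+1)]]. Then for each (n, m) ∈ ℤ², the compatibility condition U(n, m+1) · V(n, m) = V(n+1, m) · U(n, m) holds if and only if u(n+1, m+1) · ( p − q + u(n, m+1) − u(n+1, m) ) = p·u(n, m+1) − q·u(n+1, m). -/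
/-- Lax pair for the 3-point discrete Burgers equation: the zero-curvature
condition is equivalent to the equation. -/
theorem discrete_burgers_lax
    (u : ℤ → ℤ → ℝ) (p q r : ℝ) (hr : r ≠ 0) (n m : ℤ) :
    let U : ℤ → ℤ → Matrix (Fin 2) (Fin 2) ℝ := fun n m =>
      !![p, -r * u (n + 1) m; 1, p - r - u (n + 1) m]
    let V : ℤ → ℤ → Matrix (Fin 2) (Fin 2) ℝ := fun n m =>
      !![q, -r * u n (m + 1); 1, q - r - u n (m + 1)]
    (U n (m + 1) * V n m = V (n + 1) m * U n m ↔
      u (n + 1) (m + 1) * (p - q + u n (m + 1) - u (n + 1) m)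
        = p * u n (m + 1) - q * u (n + 1) m) := by
  intro U V
  simp only [U, V]
  generalize u (n + 1) (m + 1) = a
  generalize u n (m + 1) = b
  generalize u (n + 1) m = c
  constructor
  · intro h
    have h11 := Matrix.ext_iff.2 h 1 1
    simp [Matrix.mul_apply, Fin.sum_univ_two] at h11
    linear_combination h11
  · intro h
    ext i j
    fin_cases i <;> fin_cases j
    · simp [Matrix.mul_apply, Fin.sum_univ_two]
      ring
    · simp [Matrix.mul_apply, Fin.sum_univ_two]
      linear_combination r * h
    · simp [Matrix.mul_apply, Fin.sum_univ_two]
      ring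
    · simp [Matrix.mul_apply, Fin.sum_univ_two]
      linear_combination h
end

section
/- Let c, d : ℤ × ℝ → ℝ be differentiable in x with c(n)d(n) < 0 for all n, and suppose ∂_x c(n) = c(n) c(n+1) d(n+1) and ∂_x d(n) = −d(n) d(n−1) c(n−1) for all n ∈ ℤ. Then q(n) = ln( −c(n) d(n) ) satisfies the Volterra equation ∂_x q(n) = −e^{q(n+1)} + e^{q(n−1)} for all n ∈ ℤ. -/
/-! Both equations have the form `∂ₓ c(n) = c(n) u` and `∂ₓ d(n) = d(n) v`, so the logarithmic
derivative of `-c(n)d(n)` is `u + v = c(n+1)d(n+1) - c(n-1)d(n-1)`, and each of these two products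
is `-e^{q}` at the neighbouring site. -/

theorem HasDerivAt.log_mul_of_logDeriv {f g : ℝ → ℝ} {u v x : ℝ}
    (hf : HasDerivAt f (f x * u) x) (hg : HasDerivAt g (g x * v) x) (hfg : f x * g x ≠ 0) :
    HasDerivAt (fun y => Real.log (f y * g y)) (u + v) x := by
  obtain ⟨hf0, hg0⟩ := mul_ne_zero_iff.mp hfg
  refine ((hf.mul hg).log hfg).congr_deriv ?_
  simp only [Pi.mul_apply]
  field_simp

/-- The constrained D∆mKP(E) x-flow yields the Volterra equation for
`q(n) = ln(-c(n)d(n))`. -/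
theorem constrained_dDmKPE_volterra
    (c d : ℤ → ℝ → ℝ)
    (hneg : ∀ n x, c n x * d n x < 0)
    (hc : ∀ n x, HasDerivAt (c n) (c n x * c (n + 1) x * d (n + 1) x) x)
    (hd : ∀ n x, HasDerivAt (d n) (-(d n x * d (n - 1) x * c (n - 1) x)) x) :
    let q : ℤ → ℝ → ℝ := fun n x => Real.log (-(c n x * d n x))
    ∀ n x, HasDerivAt (q n)
      (-Real.exp (q (n + 1) x) + Real.exp (q (n - 1) x)) x := by
  intro q n x
  have hexp : ∀ m, Real.exp (q m x) = -(c m x * d m x) := fun m =>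
    Real.exp_log (neg_pos.mpr (hneg m x))
  have hlog : HasDerivAt (fun y => Real.log (c n y * d n y))
      (c (n + 1) x * d (n + 1) x + -(c (n - 1) x * d (n - 1) x)) x :=
    ((hc n x).congr_deriv (mul_assoc _ _ _)).log_mul_of_logDeriv
      ((hd n x).congr_deriv (by ring)) (hneg n x).ne
  rw [hexp, hexp]
  simpa only [q, Real.log_neg_eq_log, neg_neg] using hlog
end

section
/- Let c : ℤ × ℝ → ℝ be nowhere zero and differentiable in x, and define d(n) = −1/c(n−2). Then the pair (c, d) satisfies the coupled system ∂_x c(n) = c(n) c(n+1) d(n+1), ∂_x d(n) = −d(n) d(n−1) c(n−1) (for all n ∈ ℤ) if and only if c satisfies the single scalar equation ∂_x c(n) = −c(n) c(n+1)/c(n−1) for all n ∈ ℤ. Moreover, if in addition c(n)/c(n−2) > 0 for all n and the scalar equation holds, then q(n) = ln( c(n)/c(n−2) ) satisfies the Volterra equation ∂_x q(n) = −e^{q(n+1)} + e^{q(n−1)} for all n ∈ ℤ. -/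
/-!
Along the reduction `d(n) = -1/c(n-2)` the first equation of the coupled system is the scalar
equation verbatim, and the second one is the scalar equation at `n - 2` divided by `c(n-2)²`.
Since the right-hand side of the scalar equation never vanishes, it forces every `c n` to be
differentiable, so the chain rule applies to `d` and to `q(n) = log c(n) - log c(n-2)`. The
logarithmic derivative `∂ₓ c(n) / c(n) = -c(n+1)/c(n-1)` is `-e^{q(n+1)}`, and `∂ₓ q(n)` is its
difference at `n` and `n - 2`.
-/

open Real

namespace DDmKPE

def CoupledFlow (c d : ℤ → ℝ → ℝ) : Prop :=
  ∀ n x, deriv (c n) x = c n x * c (n + 1) x * d (n + 1) x ∧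
    deriv (d n) x = -(d n x * d (n - 1) x * c (n - 1) x)

def ScalarFlow (c : ℤ → ℝ → ℝ) : Prop :=
  ∀ n x, deriv (c n) x = -(c n x * c (n + 1) x / c (n - 1) x)

def VolterraFlow (q : ℤ → ℝ → ℝ) : Prop :=
  ∀ n x, HasDerivAt (q n) (-exp (q (n + 1) x) + exp (q (n - 1) x)) x

noncomputable def reducedAdjoint (c : ℤ → ℝ → ℝ) (n : ℤ) (x : ℝ) : ℝ := -1 / c (n - 2) x

noncomputable def volterraVar (c : ℤ → ℝ → ℝ) (n : ℤ) (x : ℝ) : ℝ := log (c n x / c (n - 2) x)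

lemma hasDerivAt_neg_one_div {f : ℝ → ℝ} {f' x : ℝ} (hf : HasDerivAt f f' x) (hx : f x ≠ 0) :
    HasDerivAt (fun y => -1 / f y) (f' / f x ^ 2) x := by
  have hfun : (fun y => -1 / f y) = fun y => -(f y)⁻¹ := by
    ext y
    ring
  rw [hfun]
  exact (hf.inv hx).neg.congr_deriv (by ring)

lemma hasDerivAt_log_div {f g : ℝ → ℝ} {f' g' x : ℝ} (hf : HasDerivAt f f' x)
    (hg : HasDerivAt g g' x) (hfx : f x ≠ 0) (hgx : g x ≠ 0) :
    HasDerivAt (fun y => log (f y / g y)) (f' / f x - g' / g x) x :=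
  ((hf.div hg hgx).log (div_ne_zero hfx hgx)).congr_deriv (by rw [Pi.div_apply]; field_simp)

variable {c : ℤ → ℝ → ℝ}

lemma ScalarFlow.differentiableAt (hc0 : ∀ n x, c n x ≠ 0) (h : ScalarFlow c) (n : ℤ) (x : ℝ) :
    DifferentiableAt ℝ (c n) x :=
  differentiableAt_of_deriv_ne_zero <| by
    rw [h n x]
    exact neg_ne_zero.2 (div_ne_zero (mul_ne_zero (hc0 _ _) (hc0 _ _)) (hc0 _ _))

lemma ScalarFlow.hasDerivAt_reducedAdjoint (hc0 : ∀ n x, c n x ≠ 0) (h : ScalarFlow c)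
    (n : ℤ) (x : ℝ) :
    HasDerivAt (reducedAdjoint c n) (-(c (n - 1) x / (c (n - 2) x * c (n - 3) x))) x := by
  have hd := hasDerivAt_neg_one_div (h.differentiableAt hc0 (n - 2) x).hasDerivAt (hc0 _ x)
  refine hd.congr_deriv ?_
  rw [h (n - 2) x, show n - 2 + 1 = n - 1 by ring, show n - 2 - 1 = n - 3 by ring]
  have := hc0 (n - 1) x
  have := hc0 (n - 2) x
  have := hc0 (n - 3) x
  field_simp

theorem coupledFlow_reducedAdjoint_iff (hc0 : ∀ n x, c n x ≠ 0) :
    CoupledFlow c (reducedAdjoint c) ↔ ScalarFlow c := by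
  have shift : ∀ n : ℤ, n + 1 - 2 = n - 1 := fun n => by ring
  constructor
  · intro h n x
    rw [(h n x).1, reducedAdjoint, shift]
    ring
  · intro h n x
    refine ⟨?_, ?_⟩
    · rw [h n x, reducedAdjoint, shift]
      ring
    · rw [(h.hasDerivAt_reducedAdjoint hc0 n x).deriv, reducedAdjoint, reducedAdjoint,
        show n - 1 - 2 = n - 3 by ring]
      have := hc0 (n - 2) x
      have := hc0 (n - 3) x
      field_simp

lemma exp_volterraVar (hpos : ∀ n x, 0 < c n x / c (n - 2) x) (n : ℤ) (x : ℝ) :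
    exp (volterraVar c n x) = c n x / c (n - 2) x :=
  exp_log (hpos n x)

theorem ScalarFlow.volterraFlow (hpos : ∀ n x, 0 < c n x / c (n - 2) x) (h : ScalarFlow c) :
    VolterraFlow (volterraVar c) := by
  have hc0 : ∀ n x, c n x ≠ 0 := fun n x => (div_ne_zero_iff.1 (hpos n x).ne').1
  intro n x
  refine (hasDerivAt_log_div (h.differentiableAt hc0 n x).hasDerivAt
    (h.differentiableAt hc0 (n - 2) x).hasDerivAt (hc0 n x) (hc0 (n - 2) x)).congr_deriv ?_
  rw [exp_volterraVar hpos, exp_volterraVar hpos, h n x, h (n - 2) x,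
    show n + 1 - 2 = n - 1 by ring, show n - 1 - 2 = n - 3 by ring,
    show n - 2 + 1 = n - 1 by ring, show n - 2 - 1 = n - 3 by ring]
  have := hc0 n x
  have := hc0 (n - 1) x
  have := hc0 (n - 2) x
  have := hc0 (n - 3) x
  field_simp
  ring

end DDmKPE

open DDmKPE in
theorem dDmKPE_one_field_reduction_general
    (c : ℤ → ℝ → ℝ) (hc0 : ∀ n x, c n x ≠ 0) :
    let d : ℤ → ℝ → ℝ := fun n x => -1 / c (n - 2) x
    let q : ℤ → ℝ → ℝ := fun n x => Real.log (c n x / c (n - 2) x)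
    ((∀ n x, deriv (c n) x = c n x * c (n + 1) x * d (n + 1) x ∧
        deriv (d n) x = -(d n x * d (n - 1) x * c (n - 1) x)) ↔
      (∀ n x, deriv (c n) x = -(c n x * c (n + 1) x / c (n - 1) x))) ∧
    ((∀ n x, c n x / c (n - 2) x > 0) →
      (∀ n x, deriv (c n) x = -(c n x * c (n + 1) x / c (n - 1) x)) →
      ∀ n x, HasDerivAt (q n)
        (-Real.exp (q (n + 1) x) + Real.exp (q (n - 1) x)) x) :=
  ⟨coupledFlow_reducedAdjoint_iff hc0, ScalarFlow.volterraFlow⟩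

/-- The one-field reduction `d(n) = -1/c(n-2)` of the constrained D∆mKP(E)
x-flow: the coupled system collapses to a single scalar equation, whose
logarithmic variable solves the Volterra equation. -/
theorem dDmKPE_one_field_reduction
    (c : ℤ → ℝ → ℝ) (hc0 : ∀ n x, c n x ≠ 0)
    (hcd : ∀ n, Differentiable ℝ (c n)) :
    let d : ℤ → ℝ → ℝ := fun n x => -1 / c (n - 2) x
    let q : ℤ → ℝ → ℝ := fun n x => Real.log (c n x / c (n - 2) x)
    ((∀ n x, deriv (c n) x = c n x * c (n + 1) x * d (n + 1) x ∧
        deriv (d n) x = -(d n x * d (n - 1) x * c (n - 1) x)) ↔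
      (∀ n x, deriv (c n) x = -(c n x * c (n + 1) x / c (n - 1) x))) ∧
    ((∀ n x, c n x / c (n - 2) x > 0) →
      (∀ n x, deriv (c n) x = -(c n x * c (n + 1) x / c (n - 1) x)) →
      ∀ n x, HasDerivAt (q n)
        (-Real.exp (q (n + 1) x) + Real.exp (q (n - 1) x)) x) :=
  dDmKPE_one_field_reduction_general c hc0
end

section
/- Let c, d : ℤ × ℝ → ℝ be differentiable in x and satisfy ∂_x c(n) = c(n) c(n+1) d(n+1) and ∂_x d(n) = −d(n) d(n−1) c(n−1) for all n ∈ ℤ. Define w(n) = c(n) d(n+1), for each integer s ≥ 0 the quantity w_s(n) = c(n) d(n−s), and π_s(n) = ∏_{i=1}^{s} w(n−i) (with π_0 = 1). Then for all n ∈ ℤ: (a) w_0(n+1) − w_0(n) = ∂_x c(n)/c(n) + ∂_x d(n+1)/d(n+1) wherever c(n) and d(n+1) are nonzero (i.e. Δw_0 = ∂_x ln w); and (b) for every integer s ≥ 0, π_{s+1}(n+1) w_{s+1}(n+1) − π_{s+1}(n) w_{s+1}(n) = π_s(n) · ∂_x w_s(n). -/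
/-!
Under the flow `c' = c(n) c(n+1) d(n+1)`, `d' = -d(n) d(n-1) c(n-1)`, the logarithmic derivative of
`w(n) = c(n) d(n+1)` is `c(n+1) d(n+1) - c(n) d(n)`, which is `Δ w_0`. For the recursion, peeling
the factor `w(n)` off `π_{s+1}(n+1)` and the factor `w(n-s-1)` off `π_{s+1}(n)` leaves `π_s(n)`
times `w(n) w_{s+1}(n+1) - w(n-s-1) w_{s+1}(n)`, and the two products are exactly the two terms of
the Leibniz rule for `∂_x (c(n) d(n-s))`.
-/

theorem Finset.prod_Icc_one_succ_sub {M : Type*} [CommMonoid M] (f : ℤ → M) (n : ℤ) (s : ℕ) :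
    ∏ i ∈ Finset.Icc 1 (s + 1), f (n + 1 - i) = f n * ∏ i ∈ Finset.Icc 1 s, f (n - i) := by
  induction s with
  | zero => simp
  | succ s ih =>
    rw [Finset.prod_Icc_succ_top (by omega), ih, Finset.prod_Icc_succ_top (by omega), mul_assoc]
    push_cast
    rw [show n + 1 - (s + 1 + 1 : ℤ) = n - (s + 1) by ring]

section ConstrainedFlow

variable {c d : ℤ → ℝ → ℝ}
  (hc : ∀ n x, HasDerivAt (c n) (c n x * c (n + 1) x * d (n + 1) x) x)
  (hd : ∀ n x, HasDerivAt (d n) (-(d n x * d (n - 1) x * c (n - 1) x)) x)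

include hc hd

theorem logDeriv_eq_sub_of_constrainedFlow {n : ℤ} {x : ℝ} (hcn : c n x ≠ 0)
    (hdn : d (n + 1) x ≠ 0) :
    deriv (c n) x / c n x + deriv (d (n + 1)) x / d (n + 1) x
      = c (n + 1) x * d (n + 1) x - c n x * d n x := by
  rw [(hc n x).deriv, (hd (n + 1) x).deriv, add_sub_cancel_right]
  field_simp
  ring

theorem hasDerivAt_mul_shift_of_constrainedFlow (n : ℤ) (s : ℕ) (x : ℝ) :
    HasDerivAt (fun y => c n y * d (n - s) y)
      (c n x * d (n + 1) x * (c (n + 1) x * d (n - s) x)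
        - c (n - (s + 1)) x * d (n - s) x * (c n x * d (n - (s + 1)) x)) x := by
  refine ((hc n x).mul (hd (n - s) x)).congr_deriv ?_
  rw [show n - s - 1 = n - (s + 1) by ring]
  ring

end ConstrainedFlow

/-- Under the constrained D∆mKP(E) x-flow, the expressions `w = c(n)d(n+1)`,
`w_s = c(n)d(n-s)` satisfy the defining recursion of the D∆mKP(E)
coefficients (local difference form). -/
theorem dDmKPE_coefficients
    (c d : ℤ → ℝ → ℝ)
    (hc : ∀ n x, HasDerivAt (c n) (c n x * c (n + 1) x * d (n + 1) x) x)
    (hd : ∀ n x, HasDerivAt (d n) (-(d n x * d (n - 1) x * c (n - 1) x)) x) :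
    let w : ℤ → ℝ → ℝ := fun n x => c n x * d (n + 1) x
    let ws : ℕ → ℤ → ℝ → ℝ := fun s n x => c n x * d (n - (s : ℤ)) x
    let pis : ℕ → ℤ → ℝ → ℝ := fun s n x => ∏ i ∈ Finset.Icc 1 s, w (n - (i : ℤ)) x
    (∀ n x, c n x ≠ 0 → d (n + 1) x ≠ 0 →
      ws 0 (n + 1) x - ws 0 n x
        = deriv (c n) x / c n x + deriv (d (n + 1)) x / d (n + 1) x) ∧
    (∀ s : ℕ, ∀ n x,
      pis (s + 1) (n + 1) x * ws (s + 1) (n + 1) x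
        - pis (s + 1) n x * ws (s + 1) n x
        = pis s n x * deriv (fun y => ws s n y) x) := by
  intro w ws pis
  refine ⟨fun n x hcn hdn => ?_, fun s n x => ?_⟩
  · rw [logDeriv_eq_sub_of_constrainedFlow hc hd hcn hdn]
    simp [ws]
  · have hpis_top : pis (s + 1) (n + 1) x = w n x * pis s n x :=
      Finset.prod_Icc_one_succ_sub (w · x) n s
    have hpis_bot : pis (s + 1) n x = pis s n x * w (n - (s + 1)) x := by
      simp only [pis, Finset.prod_Icc_succ_top (Nat.le_add_left 1 s), Nat.cast_succ]
    rw [hpis_top, hpis_bot, (hasDerivAt_mul_shift_of_constrainedFlow hc hd n s x).deriv]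
    simp only [w, ws, Nat.cast_succ, show n + 1 - (s + 1 : ℤ) = n - s by ring,
      show n - (s + 1 : ℤ) + 1 = n - s by ring]
    ring
end
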